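/- arXiv:1812.11518 — 4 statements merged into one kernel-verified Lean document; each statement's English description precedes it below -/
import Mathlib

section
/- For every commutative ring R, every sequence x : ℕ → R, every c ∈ R and every n ≥ 1, the autonomous polynomials satisfy A_n(c·x) = c^n · A_n(x); equivalently, the autonomous operator satisfies 𝔄(c·x)(n) = c^{n+1} · 𝔄(x)(n) for all n ≥ 0. -/
/-- Binomial (Hurwitz) convolution of sequences: `(y ⊛ z)(n) = ∑ (n choose k) y(k) z(n-k)`. -/
def hconv {R : Type*} [CommRing R] (y z : ℕ → R) : ℕ → R :=
  fun n => ∑ k ∈ Finset.range (n + 1), (n.choose k : R) * y k * z (n - k)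

/-- `DSeq x m` is `D_{m+1}(x)`, where `D_1(x) = x` and `D_{m+1}(x) = x ⊛ σ(D_m(x))`. -/
def DSeq {R : Type*} [CommRing R] (x : ℕ → R) : ℕ → ℕ → R
  | 0 => x
  | m + 1 => hconv x (fun j => DSeq x m (j + 1))

/-- `autPoly x n` is the `n`-th autonomous polynomial `A_n(x) = D_n(x)(0)`, meaningful for
`n ≥ 1`. -/
def autPoly {R : Type*} [CommRing R] (x : ℕ → R) (n : ℕ) : R := DSeq x (n - 1) 0

/-- The autonomous operator `𝔄(x)(n) = A_{n+1}(x)`. -/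
def autOp {R : Type*} [CommRing R] (x : ℕ → R) (n : ℕ) : R := autPoly x (n + 1)

lemma DSeq_const_smul {R : Type*} [CommRing R] (x : ℕ → R) (c : R) (m : ℕ) :
    ∀ j, DSeq (fun j => c * x j) m j = c ^ (m + 1) * DSeq x m j := by
  induction m with
  | zero => intro j; simp [DSeq]
  | succ m ih =>
    intro j
    simp only [DSeq, hconv, Finset.mul_sum]
    refine Finset.sum_congr rfl fun k _ => ?_
    rw [ih]
    ring

/-- For every commutative ring `R`, sequence `x`, `c ∈ R` and `n ≥ 1`, one has
`A_n(c·x) = c^n · A_n(x)`; equivalently `𝔄(c·x)(n) = c^(n+1) · 𝔄(x)(n)` for all `n ≥ 0`. -/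
theorem autPoly_const_smul {R : Type*} [CommRing R] (x : ℕ → R) (c : R) :
    (∀ n : ℕ, 1 ≤ n → autPoly (fun j => c * x j) n = c ^ n * autPoly x n) ∧
    (∀ n : ℕ, autOp (fun j => c * x j) n = c ^ (n + 1) * autOp x n) := by
  constructor
  · intro n hn
    obtain ⟨m, rfl⟩ := Nat.exists_eq_add_of_le hn
    simp [autPoly, DSeq_const_smul, Nat.add_sub_cancel_left, Nat.add_comm]
  · intro n
    simp [autOp, autPoly, DSeq_const_smul]
end

section
/- For every commutative ring R, every sequence x : ℕ → R, every α ∈ R and every n ≥ 1, the autonomous polynomials satisfy A_n(h_α·x) = α^{n−1} · A_n(x), where h_α is the geometric sequence h_α(j) = α^j; consequently 𝔄(h_α·x)(n) = α^n·𝔄(x)(n) for all n ≥ 0, i.e. the autonomous operator is 1-homogeneous: 𝔄(h_α·x) = h_α·𝔄(x). -/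
lemma DSeq_geom {R : Type*} [CommRing R] (x : ℕ → R) (α : R) :
    ∀ m j : ℕ, DSeq (fun j => α ^ j * x j) m j = α ^ (m + j) * DSeq x m j := by
  intro m
  induction m with
  | zero => intro j; simp [DSeq]
  | succ m ih =>
    intro n
    simp only [DSeq, hconv, Finset.mul_sum]
    refine Finset.sum_congr rfl fun k hk => ?_
    have hk' : k ≤ n := Nat.lt_succ_iff.mp (Finset.mem_range.mp hk)
    rw [ih (n - k + 1)]
    rw [show m + 1 + n = k + (m + (n - k + 1)) from by omega, pow_add]
    ring

/-- For a commutative ring `R`, a sequence `x`, `α ∈ R` and `n ≥ 1`, the autonomous polynomials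
satisfy `A_n(h_α·x) = α^(n-1) · A_n(x)` where `h_α(j) = α^j`; consequently
`𝔄(h_α·x)(n) = α^n · 𝔄(x)(n)`, i.e. `𝔄` is 1-homogeneous: `𝔄(h_α·x) = h_α·𝔄(x)`. -/
theorem autPoly_geom_smul {R : Type*} [CommRing R] (x : ℕ → R) (α : R) :
    (∀ n : ℕ, 1 ≤ n → autPoly (fun j => α ^ j * x j) n = α ^ (n - 1) * autPoly x n) ∧
    (∀ n : ℕ, autOp (fun j => α ^ j * x j) n = α ^ n * autOp x n) ∧
    autOp (fun j => α ^ j * x j) = fun n => α ^ n * autOp x n := by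
  refine ⟨fun n _ => ?_, fun n => ?_, funext fun n => ?_⟩ <;>
    simp [autPoly, autOp, DSeq_geom x α]
end

section
/- Let R be an integral domain and let x, y : ℕ → R be sequences with x(0) ≠ 0 and y(0) ≠ 0. If A_n(x) = A_n(y) for all n ≥ 1 (i.e. 𝔄(x) = 𝔄(y)), then x = y; that is, the autonomous operator is injective on sequences with nonzero first term. -/
lemma DSeq_congr {R : Type*} [CommRing R] (x y : ℕ → R) :
    ∀ m k, (∀ i ≤ m + k, x i = y i) → DSeq x m k = DSeq y m k := by
  intro m
  induction m with
  | zero => intro k h; exact h k (by omega)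
  | succ m ih =>
    intro k h
    simp only [DSeq, hconv]
    refine Finset.sum_congr rfl ?_
    intro j hj
    rw [Finset.mem_range, Nat.lt_succ_iff] at hj
    rw [h j (by omega), ih (k - j + 1) (fun i hi => h i (by omega))]

lemma DSeq_sub {R : Type*} [CommRing R] (x y : ℕ → R) :
    ∀ m k, (∀ i < m + k, x i = y i) →
      DSeq x m k - DSeq y m k = x 0 ^ m * (x (m + k) - y (m + k)) := by
  intro m
  induction m with
  | zero => intro k h; simp [DSeq]
  | succ m ih =>
    intro k h
    have hx0 : x 0 = y 0 := h 0 (by omega)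
    simp only [DSeq, hconv]
    rw [← Finset.sum_sub_distrib]
    have hsum : ∀ j ∈ Finset.range (k + 1),
        ((k.choose j : R) * x j * DSeq x m (k - j + 1)
          - (k.choose j : R) * y j * DSeq y m (k - j + 1))
        = if j = 0 then x 0 ^ (m + 1) * (x (m + 1 + k) - y (m + 1 + k)) else 0 := by
      intro j hj
      rw [Finset.mem_range, Nat.lt_succ_iff] at hj
      by_cases hj0 : j = 0
      · subst hj0
        simp only [Nat.choose_zero_right, Nat.cast_one, one_mul, Nat.sub_zero, if_true]
        have hih := ih (k + 1) (fun i hi => h i (by omega))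
        have e : m + (k + 1) = m + 1 + k := by omega
        rw [e] at hih
        rw [← hx0, ← mul_sub, hih, pow_succ]
        ring
      · rw [if_neg hj0]
        rw [h j (by omega),
          DSeq_congr x y m (k - j + 1) (fun i hi => h i (by omega))]
        ring
    rw [Finset.sum_congr rfl hsum, Finset.sum_ite_eq' (Finset.range (k + 1)) 0
      (fun _ => x 0 ^ (m + 1) * (x (m + 1 + k) - y (m + 1 + k)))]
    simp

/-- Let `R` be an integral domain and `x, y` sequences with `x(0) ≠ 0` and `y(0) ≠ 0`. If
`A_n(x) = A_n(y)` for all `n ≥ 1` (i.e. `𝔄(x) = 𝔄(y)`) then `x = y`: the autonomous operator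
is injective on sequences with nonzero first term. -/
theorem autOp_injective {R : Type*} [CommRing R] [IsDomain R] (x y : ℕ → R)
    (hx : x 0 ≠ 0) (hy : y 0 ≠ 0)
    (hA : ∀ n : ℕ, 1 ≤ n → autPoly x n = autPoly y n) : x = y := by
  funext n
  induction n using Nat.strong_induction_on with
  | _ n ih =>
    have h := hA (n + 1) (by omega)
    simp only [autPoly, Nat.add_sub_cancel] at h
    have key := DSeq_sub x y n 0 (fun i hi => ih i (by omega))
    rw [h, sub_self] at key
    rcases mul_eq_zero.mp key.symm with h1 | h1
    · exact absurd h1 (pow_ne_zero n hx)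
    · simpa using sub_eq_zero.mp h1
end

section
/- Let R be an integral domain which is a ℚ-algebra, let α ∈ R, let f ∈ R⟦X⟧, and set E_α := rescale α exp (the series e^{αX}). Let Δg denote the sequence (δ^j g)_{j≥0} of iterated formal derivatives of g ∈ R⟦X⟧. Then for every n ≥ 1, applying the autonomous polynomials over the commutative ring R⟦X⟧: A_n(Δ(E_α · f)) = E_α^n · A_n(F), where F : ℕ → R⟦X⟧ is the sequence F(j) = ∑_{i=0}^{j} (j choose i) · α^{j−i} · δ^i f. -/
/-! Since `d(e^{αX} g) = e^{αX} (d + α) g`, the iterated derivatives of `e^{αX} f` are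
`e^{αX} (d + α)^j f = e^{αX} F j` (binomial theorem for the commuting operators `d` and `α`).
Each `D_m` is homogeneous of degree `m` in its argument sequence, so a common factor `e^{αX}`
comes out of `A_n` as `e^{nαX}`. -/

open PowerSeries

section AutonomousPolynomials

variable {R : Type*} [CommRing R]

theorem DSeq_const_mul (g : R) (y : ℕ → R) (m j : ℕ) :
    DSeq (fun j => g * y j) m j = g ^ (m + 1) * DSeq y m j := by
  induction m generalizing j with
  | zero => simp [DSeq]
  | succ m ih =>
    simp only [DSeq, hconv, Finset.mul_sum, ih]
    refine Finset.sum_congr rfl fun k _ => ?_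
    ring

theorem autPoly_const_mul (g : R) (y : ℕ → R) {n : ℕ} (hn : 1 ≤ n) :
    autPoly (fun j => g * y j) n = g ^ n * autPoly y n := by
  rw [autPoly, autPoly, DSeq_const_mul, Nat.sub_add_cancel hn]

end AutonomousPolynomials

namespace PowerSeries

variable {R : Type*} [CommRing R]

theorem derivative_rescale (a : R) (f : R⟦X⟧) :
    d⁄dX R (rescale a f) = C a * rescale a (d⁄dX R f) := by
  ext n
  simp only [coeff_derivative, coeff_rescale, coeff_C_mul, pow_succ]
  ring

theorem derivative_rescale_exp [Algebra ℚ R] (a : R) :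
    d⁄dX R (rescale a (exp R)) = C a * rescale a (exp R) := by
  rw [derivative_rescale, derivative_exp]

theorem iterate_derivative_mul_of_derivative_eq_C_mul {a : R} {E : R⟦X⟧}
    (hE : d⁄dX R E = C a * E) (f : R⟦X⟧) (j : ℕ) :
    (d⁄dX R)^[j] (E * f) = E * (((d⁄dX R).toLinearMap + a • 1) ^ j) f := by
  induction j with
  | zero => simp
  | succ j ih =>
    rw [Function.iterate_succ_apply', ih, pow_succ', Module.End.mul_apply, Derivation.leibniz,
      hE]
    simp only [smul_eq_mul, LinearMap.add_apply, Derivation.coeFn_coe, LinearMap.smul_apply,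
      Module.End.one_apply, smul_eq_C_mul]
    ring

theorem pow_derivative_add_smul_one_apply (a : R) (f : R⟦X⟧) (j : ℕ) :
    (((d⁄dX R).toLinearMap + a • 1) ^ j) f =
      ∑ i ∈ Finset.range (j + 1), (j.choose i : R⟦X⟧) * C (a ^ (j - i)) * (d⁄dX R)^[i] f := by
  rw [((Commute.one_right _).smul_right a).add_pow, LinearMap.sum_apply]
  refine Finset.sum_congr rfl fun i _ => ?_
  simp only [smul_pow, one_pow, Module.End.mul_apply, Module.End.natCast_apply,
    LinearMap.smul_apply, Module.End.one_apply, map_nsmul, LinearMap.map_smul,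
    Module.End.pow_apply, Derivation.coeFn_coe]
  rw [nsmul_eq_mul, smul_eq_C_mul]
  ring

end PowerSeries

theorem autPoly_exp_mul_general {R : Type*} [CommRing R] [Algebra ℚ R]
    (α : R) (f : R⟦X⟧) (F : ℕ → R⟦X⟧)
    (hF : ∀ j : ℕ, F j = ∑ i ∈ Finset.range (j + 1),
      (j.choose i : R⟦X⟧) * PowerSeries.C (α ^ (j - i)) * derivativeFun^[i] f) :
    ∀ n : ℕ, 1 ≤ n →
      autPoly (fun j => derivativeFun^[j] (rescale α (exp R) * f)) n =
        (rescale α (exp R)) ^ n * autPoly F n := by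
  intro n hn
  have hΔ : (fun j => derivativeFun^[j] (rescale α (exp R) * f)) =
      fun j => rescale α (exp R) * F j := by
    funext j
    rw [hF]
    exact (iterate_derivative_mul_of_derivative_eq_C_mul (derivative_rescale_exp α) f j).trans
      (congrArg _ (pow_derivative_add_smul_one_apply α f j))
  rw [hΔ, autPoly_const_mul _ _ hn]

/-- Let `R` be an integral domain which is a `ℚ`-algebra, `α ∈ R`, `f ∈ R⟦X⟧`, and
`E_α = rescale α exp` (the series `e^{αX}`). Applying the autonomous polynomials over the
commutative ring `R⟦X⟧` to the sequence of iterated derivatives `Δ(E_α·f)`, one has for every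
`n ≥ 1`: `A_n(Δ(E_α·f)) = E_α^n · A_n(F)` where `F(j) = ∑_{i≤j} (j choose i) α^{j-i} δ^i f`. -/
theorem autPoly_exp_mul {R : Type*} [CommRing R] [IsDomain R] [Algebra ℚ R]
    (α : R) (f : R⟦X⟧) (F : ℕ → R⟦X⟧)
    (hF : ∀ j : ℕ, F j = ∑ i ∈ Finset.range (j + 1),
      (j.choose i : R⟦X⟧) * PowerSeries.C (α ^ (j - i)) * derivativeFun^[i] f) :
    ∀ n : ℕ, 1 ≤ n →
      autPoly (fun j => derivativeFun^[j] (rescale α (exp R) * f)) n =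
        (rescale α (exp R)) ^ n * autPoly F n :=
  autPoly_exp_mul_general α f F hF
end
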